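/- For the OneMax problem under a dynamic uniform constraint with cardinality bound changing from B to B* and D = |B* − B|, the MOEA, starting from a solution that is optimal for bound B, has expected re-optimization time O(nD log((n−B)/(n−B*))) if B < B*, and O(nD log(B/B*)) if B > B*. -/

import Mathlib

open scoped ENNReal
open Classical

noncomputable section

/-- Probability that the Markov chain with transition kernel `K`, started at `x`,
has not visited the target set `A` during the time steps `0, 1, …, t`. -/
def survive {S : Type*} (K : S → S → ℝ≥0∞) (A : S → Prop) : ℕ → S → ℝ≥0∞
  | 0, x => if A x then 0 else 1
  | t + 1, x => if A x then 0 else ∑' y, K x y * survive K A t y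

/-- Expected hitting time of the set `A` for the Markov chain with kernel `K` started at `x`,
computed as `∑_{t ≥ 0} Pr(T > t)`. -/
def hitTime {S : Type*} (K : S → S → ℝ≥0∞) (A : S → Prop) (x : S) : ℝ≥0∞ :=
  ∑' t, survive K A t x

/-- One step of a (1+1)-type algorithm: an offspring `z` is sampled from the mutation
distribution `pm x ·`; it replaces `x` iff `accept x z` holds. -/
def eaKernel {S : Type*} (pm : S → S → ℝ≥0∞) (accept : S → S → Prop) (x y : S) : ℝ≥0∞ :=
  ∑' z, if (if accept x z then z else x) = y then pm x z else 0

/-- The number of one-bits of a bit string. -/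
def ones {n : ℕ} (x : Fin n → Bool) : ℕ := (Finset.univ.filter fun i => x i = true).card

/-- Standard bit mutation: each of the `n` bits is flipped independently with probability `1/n`. -/
def pmutEA (n : ℕ) (x y : Fin n → Bool) : ℝ≥0∞ :=
  ((n : ℝ≥0∞)⁻¹) ^ hammingDist x y * (1 - (n : ℝ≥0∞)⁻¹) ^ (n - hammingDist x y)

/-- RLS mutation: exactly one bit, chosen uniformly at random, is flipped. -/
def pmutRLS (n : ℕ) (x y : Fin n → Bool) : ℝ≥0∞ :=
  if hammingDist x y = 1 then (n : ℝ≥0∞)⁻¹ else 0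


/-- Dominance w.r.t. the vector-valued fitness `f_MOEA(x) = (|x|₁, f(x))`:
`y` dominates `z` iff they have the same number of ones and `f y ≥ f z`. -/
def dominates {n : ℕ} (f : (Fin n → Bool) → ℝ) (y z : Fin n → Bool) : Prop :=
  ones y = ones z ∧ f z ≤ f y

/-- Strict dominance: same number of ones and strictly larger `f`-value. -/
def strictlyDominates {n : ℕ} (f : (Fin n → Bool) → ℝ) (y z : Fin n → Bool) : Prop :=
  ones y = ones z ∧ f z < f y

/-- The MOEA population update: the offspring `y` enters the population `P` iff its number of
ones lies between the two bounds and no member of `P` dominates it; in that case all members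
strictly dominated by `y` are removed. -/
def moeaUpdate {n : ℕ} (f : (Fin n → Bool) → ℝ) (lo hi : ℕ)
    (P : Finset (Fin n → Bool)) (y : Fin n → Bool) : Finset (Fin n → Bool) :=
  if lo ≤ ones y ∧ ones y ≤ hi ∧ ¬∃ w ∈ P, dominates f w y then
    insert y (P.filter fun z => ¬strictlyDominates f y z)
  else P

/-- One iteration of the MOEA: a parent is chosen uniformly at random from the population,
an offspring is created by standard bit mutation, and the population is updated. -/
def moeaKernel (n : ℕ) (f : (Fin n → Bool) → ℝ) (lo hi : ℕ)
    (P Q : Finset (Fin n → Bool)) : ℝ≥0∞ :=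
  (P.card : ℝ≥0∞)⁻¹ *
    ∑ x ∈ P, ∑' y, if moeaUpdate f lo hi P y = Q then pmutEA n x y else 0

/-!
The population holds at most one solution per number of ones between `B` and `B*`, hence at
most `D + 1` solutions, and the largest number of ones `W` it contains (for `B < B*`) never
decreases. While `W < B*`, selecting the solution with `W` ones (probability `≥ 1/(D+1)`) and
flipping exactly one of its `n - W` zero-bits (probability `≥ (n - W)/(4n)`) increases `W`, so by
the fitness-level method the expected time is at most
`∑_{W = B}^{B*-1} 4n(D+1)/(n - W) ≤ 8nD log((n - B)/(n - B*))`.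
Complementing every bit string turns the case `B* < B` into this one, with `n - B < n - B*`.
-/

section MarkovChain

variable {S : Type*} {K : S → S → ℝ≥0∞} {A : S → Prop}

theorem hitTime_le_of_drift {h : S → ℝ≥0∞} (hdrift : ∀ x, ¬ A x → 1 + ∑' y, K x y * h y ≤ h x)
    (x : S) : hitTime K A x ≤ h x := by
  have partial_le : ∀ t x, ∑ s ∈ Finset.range (t + 1), survive K A s x ≤ h x := by
    intro t
    induction t with
    | zero =>
      intro x
      by_cases hA : A x
      · simp [survive, hA]
      · simpa [survive, hA] using le_self_add.trans (hdrift x hA)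
    | succ t ih =>
      intro x
      by_cases hA : A x
      · have hzero : ∀ s, survive K A s x = 0 := by intro s; cases s <;> simp [survive, hA]
        simp [hzero]
      · calc ∑ s ∈ Finset.range (t + 2), survive K A s x
            = 1 + ∑' y, K x y * ∑ s ∈ Finset.range (t + 1), survive K A s y := by
              simp only [Finset.sum_range_succ' _ (t + 1), survive, if_neg hA, Finset.mul_sum]
              rw [add_comm, Summable.tsum_finsetSum fun _ _ => ENNReal.summable]
          _ ≤ 1 + ∑' y, K x y * h y := by gcongr with y; exact ih y
          _ ≤ h x := hdrift x hA
  rw [hitTime, ENNReal.tsum_eq_iSup_nat]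
  refine iSup_le fun t => ?_
  cases t with
  | zero => simp
  | succ t => exact partial_le t x

theorem hitTime_le_sum_of_levels {I : S → Prop} {L : S → ℕ} {m : ℕ} {t : ℕ → ℝ≥0∞}
    (hK : ∀ x, ∑' y, K x y ≤ 1)
    (hstep : ∀ x y, I x → ¬ A x → K x y ≠ 0 → I y ∧ L x ≤ L y)
    (htarget : ∀ x, I x → m ≤ L x → A x)
    (hprog : ∀ x, I x → ¬ A x → 1 ≤ t (L x) * ∑' y, K x y * if L x < L y then 1 else 0)
    {x : S} (hx : I x) :
    hitTime K A x ≤ ∑ j ∈ Finset.Ico (L x) m, t j := by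
  set Φ : ℕ → ℝ≥0∞ := fun k => ∑ j ∈ Finset.Ico k m, t j
  have hΦ_succ : ∀ k, k < m → t k + Φ (k + 1) = Φ k := fun k hk =>
    (Finset.sum_eq_sum_Ico_succ_bot hk t).symm
  have hΦ_anti : Antitone Φ := fun k k' hkk' =>
    Finset.sum_le_sum_of_subset (Finset.Ico_subset_Ico_left hkk')
  -- The potential is `⊤` off the invariant; such states are never entered (`0 * ⊤ = 0`).
  refine (hitTime_le_of_drift (h := fun y => if I y then Φ (L y) else ⊤) (fun y hAy => ?_)
    x).trans_eq (if_pos hx)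
  by_cases hIy : I y
  swap
  · simp [hIy]
  set ℓ := L y
  have hℓ : ℓ < m := lt_of_not_ge fun h => hAy (htarget y hIy h)
  have hpoint : ∀ z, K y z * (if I z then Φ (L z) else ⊤) +
      t ℓ * (K y z * if ℓ < L z then 1 else 0) ≤ K y z * Φ ℓ := by
    intro z
    by_cases hKz : K y z = 0
    · simp [hKz]
    obtain ⟨hIz, hℓz⟩ := hstep y z hIy hAy hKz
    rw [if_pos hIz, mul_left_comm, ← mul_add]
    gcongr
    split_ifs with hlt
    · rw [mul_one, add_comm, ← hΦ_succ ℓ hℓ]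
      exact add_le_add_right (hΦ_anti hlt) _
    · rw [mul_zero, add_zero, show L z = ℓ by omega]
  rw [if_pos hIy]
  calc 1 + ∑' z, K y z * (if I z then Φ (L z) else ⊤)
      ≤ t ℓ * (∑' z, K y z * if ℓ < L z then 1 else 0) +
          ∑' z, K y z * (if I z then Φ (L z) else ⊤) := by
        gcongr; exact hprog y hIy hAy
    _ = ∑' z, (K y z * (if I z then Φ (L z) else ⊤) +
          t ℓ * (K y z * if ℓ < L z then 1 else 0)) := by
        rw [ENNReal.tsum_add, ENNReal.tsum_mul_left, add_comm]
    _ ≤ ∑' z, K y z * Φ ℓ := ENNReal.tsum_le_tsum hpoint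
    _ ≤ Φ ℓ := by rw [ENNReal.tsum_mul_right]; exact mul_le_of_le_one_left' (hK y)

theorem hitTime_equiv {T : Type*} (e : S ≃ T) {K' : T → T → ℝ≥0∞} {A' : T → Prop}
    (hK : ∀ x y, K' (e x) (e y) = K x y) (hA : ∀ x, A' (e x) ↔ A x) (x : S) :
    hitTime K' A' (e x) = hitTime K A x := by
  have hsurvive : ∀ t x, survive K' A' t (e x) = survive K A t x := by
    intro t
    induction t with
    | zero => intro x; simp [survive, hA]
    | succ t ih =>
      intro x
      simp only [survive, hA, ← e.tsum_eq, hK, ih]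
  simp only [hitTime, hsurvive]

end MarkovChain

theorem sum_Ico_inv_sub_le_log {n a b : ℕ} (hab : a ≤ b) (hbn : b < n) :
    ∑ j ∈ Finset.Ico a b, ((n : ℝ) - j)⁻¹ ≤ Real.log (((n : ℝ) - a) / ((n : ℝ) - b)) := by
  induction b, hab using Nat.le_induction with
  | base => simp
  | succ b hab ih =>
    have hb : (b : ℝ) + 1 < n := by exact_mod_cast hbn
    have hb₀ : (n : ℝ) - b ≠ 0 := by linarith
    have hb₁ : (n : ℝ) - (b + 1) ≠ 0 := by linarith
    have hlog : ((n : ℝ) - b)⁻¹ ≤ Real.log (((n : ℝ) - b) / ((n : ℝ) - (b + 1))) := by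
      have := Real.one_sub_inv_le_log_of_pos (x := ((n : ℝ) - b) / ((n : ℝ) - (b + 1)))
        (by apply div_pos <;> linarith)
      convert this using 1
      field_simp
      ring
    have ha : (n : ℝ) - a ≠ 0 := by
      have : (a : ℝ) ≤ b := by exact_mod_cast hab
      linarith
    rw [Finset.sum_Ico_succ_top hab, Nat.cast_succ,
      show ((n : ℝ) - a) / (n - (b + 1)) = (n - a) / (n - b) * ((n - b) / (n - (b + 1))) by
        field_simp,
      Real.log_mul (div_ne_zero ha hb₀) (div_ne_zero hb₀ hb₁)]
    exact add_le_add (ih (by omega)) hlog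

section BitStrings

variable {n : ℕ}

theorem ones_add_card_false (x : Fin n → Bool) :
    ones x + (Finset.univ.filter fun i => x i = false).card = n := by
  simpa [ones] using Finset.card_filter_add_card_filter_not (s := Finset.univ) (fun i => x i = true)

theorem ones_le (x : Fin n → Bool) : ones x ≤ n := by
  have := ones_add_card_false x; omega

theorem ones_compl (x : Fin n → Bool) : ones xᶜ = n - ones x := by
  have h := ones_add_card_false x
  have : ones xᶜ = (Finset.univ.filter fun i => x i = false).card := by simp [ones]
  omega

theorem ones_update_true {x : Fin n → Bool} {i : Fin n} (hi : x i = false) :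
    ones (Function.update x i true) = ones x + 1 := by
  have : (Finset.univ.filter fun j => Function.update x i true j = true) =
      insert i (Finset.univ.filter fun j => x j = true) := by
    ext j
    by_cases hj : j = i <;> simp [Function.update, hj]
  rw [ones, this, Finset.card_insert_of_notMem (by simp [hi]), ones]

theorem hammingDist_update_true {x : Fin n → Bool} {i : Fin n} (hi : x i = false) :
    hammingDist x (Function.update x i true) = 1 := by
  rw [hammingDist, Finset.card_eq_one]
  exact ⟨i, by ext j; by_cases hj : j = i <;> simp [Function.update, hj, hi]⟩

theorem pmutEA_eq_prod (x y : Fin n → Bool) :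
    pmutEA n x y = ∏ i, if x i = y i then 1 - (n : ℝ≥0∞)⁻¹ else (n : ℝ≥0∞)⁻¹ := by
  have hsplit := Finset.card_filter_add_card_filter_not (s := Finset.univ) (fun i => x i = y i)
  rw [Finset.card_univ, Fintype.card_fin] at hsplit
  rw [Finset.prod_ite, Finset.prod_const, Finset.prod_const, pmutEA, mul_comm]
  congr 2
  simp only [hammingDist, ne_eq]
  omega

theorem sum_pmutEA (x : Fin n → Bool) : ∑ y, pmutEA n x y = 1 := by
  have hbit : ∀ i : Fin n,
      ∑ b : Bool, (if x i = b then 1 - (n : ℝ≥0∞)⁻¹ else (n : ℝ≥0∞)⁻¹) = 1 := by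
    intro i
    have hinv : (n : ℝ≥0∞)⁻¹ ≤ 1 := ENNReal.inv_le_one.mpr (by exact_mod_cast i.pos)
    cases x i <;> simp [tsub_add_cancel_of_le hinv, add_tsub_cancel_of_le hinv]
  simp only [pmutEA_eq_prod]
  rw [← Fintype.prod_sum (fun i b => if x i = b then 1 - (n : ℝ≥0∞)⁻¹ else (n : ℝ≥0∞)⁻¹)]
  exact Finset.prod_eq_one fun i _ => hbit i

theorem pmutEA_compl (x y : Fin n → Bool) : pmutEA n xᶜ yᶜ = pmutEA n x y := by
  have : hammingDist xᶜ yᶜ = hammingDist x y :=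
    hammingDist_comp (fun _ b => !b) fun _ => Bool.not_injective
  rw [pmutEA, pmutEA, this]

theorem inv_four_le_one_sub_inv_pow (n : ℕ) : (4 : ℝ≥0∞)⁻¹ ≤ (1 - (n : ℝ≥0∞)⁻¹) ^ (n - 1) := by
  rcases Nat.eq_zero_or_pos n with rfl | hn
  · simp
  obtain ⟨m, rfl⟩ := Nat.exists_eq_add_of_lt hn
  rw [zero_add, Nat.add_sub_cancel]
  rcases Nat.eq_zero_or_pos m with rfl | hm
  · simp
  -- `1 - 1/(m+1)` is the inverse of `1 + 1/m`, and `(1 + 1/m)^m ≤ e < 4`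
  have hreal : ((4 : ℝ)⁻¹) ≤ (1 - ((m + 1 : ℕ) : ℝ)⁻¹) ^ m := by
    have hm' : (0 : ℝ) < m := by exact_mod_cast hm
    have hinv : 1 - ((m + 1 : ℕ) : ℝ)⁻¹ = (1 + (m : ℝ)⁻¹)⁻¹ := by
      push_cast; field_simp; ring
    rw [hinv, inv_pow]
    have := Real.one_add_inv_pow_le_exp (n := m)
    have := Real.exp_one_lt_d9
    gcongr
    linarith
  have hcast : 1 - ((m + 1 : ℕ) : ℝ≥0∞)⁻¹ = ENNReal.ofReal (1 - ((m + 1 : ℕ) : ℝ)⁻¹) := by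
    rw [ENNReal.ofReal_sub _ (by positivity), ENNReal.ofReal_one,
      ENNReal.ofReal_inv_of_pos (by positivity), ENNReal.ofReal_natCast]
  rw [hcast, ← ENNReal.ofReal_pow (sub_nonneg.mpr (inv_le_one_of_one_le₀ (by simp))),
    ← ENNReal.ofReal_ofNat, ← ENNReal.ofReal_inv_of_pos (by norm_num)]
  exact ENNReal.ofReal_le_ofReal hreal

theorem card_false_div_le_tsum_pmutEA (x : Fin n → Bool) :
    ((n - ones x : ℕ) : ℝ≥0∞) / (4 * n) ≤
      ∑' y, if ones y = ones x + 1 then pmutEA n x y else 0 := by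
  have hI : (Finset.univ.filter fun i => x i = false).card = n - ones x := by
    have := ones_add_card_false x; omega
  set I := Finset.univ.filter fun i => x i = false
  have hinj : Set.InjOn (fun i => Function.update x i true) I := by
    intro i hi j hj hij
    by_contra hne
    have := congrFun hij j
    simp_all [I, Function.update_of_ne (Ne.symm hne)]
  calc ((n - ones x : ℕ) : ℝ≥0∞) / (4 * n)
      ≤ I.card * ((n : ℝ≥0∞)⁻¹ * (1 - (n : ℝ≥0∞)⁻¹) ^ (n - 1)) := by
        rw [hI, div_eq_mul_inv, ENNReal.mul_inv (by simp) (by simp), mul_comm (4 : ℝ≥0∞)⁻¹]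
        gcongr
        exact inv_four_le_one_sub_inv_pow n
    _ = ∑ i ∈ I, pmutEA n x (Function.update x i true) := by
        rw [Finset.sum_congr rfl fun i hi => by
          rw [pmutEA, hammingDist_update_true (Finset.mem_filter.mp hi).2, pow_one],
          Finset.sum_const, nsmul_eq_mul]
    _ = ∑ y ∈ I.image fun i => Function.update x i true,
          if ones y = ones x + 1 then pmutEA n x y else 0 := by
        rw [Finset.sum_image hinj]
        exact Finset.sum_congr rfl fun i hi => by
          rw [if_pos (ones_update_true (Finset.mem_filter.mp hi).2)]
    _ ≤ _ := ENNReal.sum_le_tsum _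

end BitStrings

section MOEA

variable {n : ℕ}

theorem moeaUpdate_ones (lo hi : ℕ) (P : Finset (Fin n → Bool)) (y : Fin n → Bool) :
    moeaUpdate (fun x => (ones x : ℝ)) lo hi P y =
      if lo ≤ ones y ∧ ones y ≤ hi ∧ ∀ z ∈ P, ones z ≠ ones y then insert y P else P := by
  have hdom : ∀ w, dominates (fun x => (ones x : ℝ)) w y ↔ ones w = ones y := fun w =>
    ⟨And.left, fun h => ⟨h, by simp [h]⟩⟩
  have hfilter : P.filter (fun z => ¬strictlyDominates (fun x => (ones x : ℝ)) y z) = P :=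
    Finset.filter_true_of_mem fun z _ ⟨heq, hlt⟩ => hlt.ne (by simp [heq])
  simp only [moeaUpdate, hdom, hfilter, not_exists, not_and]

theorem tsum_moeaKernel_mul (f : (Fin n → Bool) → ℝ) (lo hi : ℕ) (P : Finset (Fin n → Bool))
    (g : Finset (Fin n → Bool) → ℝ≥0∞) :
    ∑' Q, moeaKernel n f lo hi P Q * g Q =
      (P.card : ℝ≥0∞)⁻¹ * ∑ x ∈ P, ∑' y, pmutEA n x y * g (moeaUpdate f lo hi P y) := by
  simp only [moeaKernel, mul_assoc, ENNReal.tsum_mul_left, Finset.sum_mul]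
  rw [Summable.tsum_finsetSum fun _ _ => ENNReal.summable]
  congr 1
  refine Finset.sum_congr rfl fun x _ => ?_
  simp_rw [← ENNReal.tsum_mul_right]
  rw [ENNReal.tsum_comm]
  simp [ite_mul]

theorem exists_moeaUpdate_eq_of_moeaKernel_ne_zero {f : (Fin n → Bool) → ℝ} {lo hi : ℕ}
    {P Q : Finset (Fin n → Bool)} (h : moeaKernel n f lo hi P Q ≠ 0) :
    ∃ y, moeaUpdate f lo hi P y = Q := by
  contrapose! h
  simp [moeaKernel, h]

theorem tsum_moeaKernel_le_one (f : (Fin n → Bool) → ℝ) (lo hi : ℕ) (P : Finset (Fin n → Bool)) :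
    ∑' Q, moeaKernel n f lo hi P Q ≤ 1 := by
  calc ∑' Q, moeaKernel n f lo hi P Q = (P.card : ℝ≥0∞)⁻¹ * P.card := by
        simpa [tsum_fintype, sum_pmutEA] using tsum_moeaKernel_mul f lo hi P 1
    _ ≤ 1 := ENNReal.inv_mul_le_one _

theorem moeaUpdate_ones_map_compl {lo hi : ℕ} (hlo : lo ≤ hi) (hhi : hi ≤ n)
    (P : Finset (Fin n → Bool)) (y : Fin n → Bool) :
    moeaUpdate (fun x => (ones x : ℝ)) lo hi (P.map (compl_involutive.toPerm _).toEmbedding) yᶜ =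
      (moeaUpdate (fun x => (ones x : ℝ)) (n - hi) (n - lo) P y).map
        (compl_involutive.toPerm _).toEmbedding := by
  have hy := ones_le y
  have hband : (lo ≤ n - ones y ∧ n - ones y ≤ hi) ↔ (n - hi ≤ ones y ∧ ones y ≤ n - lo) := by
    omega
  have hfresh : (∀ z ∈ P, n - ones z ≠ n - ones y) ↔ ∀ z ∈ P, ones z ≠ ones y :=
    forall₂_congr fun z _ => by have := ones_le z; omega
  simp only [moeaUpdate_ones, Finset.forall_mem_map, Equiv.coe_toEmbedding,
    Function.Involutive.coe_toPerm, ones_compl, ← and_assoc, hband, hfresh]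
  split_ifs <;> simp [Finset.map_insert]

theorem moeaKernel_ones_map_compl {lo hi : ℕ} (hlo : lo ≤ hi) (hhi : hi ≤ n)
    (P Q : Finset (Fin n → Bool)) :
    moeaKernel n (fun x => (ones x : ℝ)) lo hi (P.map (compl_involutive.toPerm _).toEmbedding)
        (Q.map (compl_involutive.toPerm _).toEmbedding) =
      moeaKernel n (fun x => (ones x : ℝ)) (n - hi) (n - lo) P Q := by
  simp only [moeaKernel, Finset.card_map, Finset.sum_map]
  congr 1
  refine Finset.sum_congr rfl fun x _ => ?_
  rw [← (compl_involutive.toPerm _).tsum_eq]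
  simp only [Equiv.coe_toEmbedding, Function.Involutive.coe_toPerm,
    moeaUpdate_ones_map_compl hlo hhi, Finset.map_inj, pmutEA_compl]

theorem sup_ones_le_sup_moeaUpdate_ones (lo hi : ℕ) (P : Finset (Fin n → Bool)) (y : Fin n → Bool) :
    P.sup ones ≤ (moeaUpdate (fun x => (ones x : ℝ)) lo hi P y).sup ones := by
  rw [moeaUpdate_ones]
  split_ifs
  · exact Finset.sup_mono (Finset.subset_insert _ _)
  · rfl

theorem sup_ones_lt_sup_moeaUpdate_ones {lo hi : ℕ} {P : Finset (Fin n → Bool)}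
    {y : Fin n → Bool} (hlo : lo ≤ P.sup ones) (hhi : P.sup ones < hi)
    (hy : ones y = P.sup ones + 1) :
    P.sup ones < (moeaUpdate (fun x => (ones x : ℝ)) lo hi P y).sup ones := by
  have hfresh : ∀ z ∈ P, ones z ≠ ones y := fun z hz => by
    have := Finset.le_sup (f := ones) hz; omega
  rw [moeaUpdate_ones, if_pos ⟨by omega, by omega, hfresh⟩, Finset.sup_insert, hy]
  exact Nat.lt_of_lt_of_le (Nat.lt_succ_self _) le_sup_left

def IsBandPopulation (lo hi : ℕ) (P : Finset (Fin n → Bool)) : Prop :=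
  P.Nonempty ∧ (∀ z ∈ P, lo ≤ ones z ∧ ones z ≤ hi) ∧ Set.InjOn ones (P : Set (Fin n → Bool))

namespace IsBandPopulation

variable {lo hi : ℕ} {P : Finset (Fin n → Bool)}

theorem card_le (hP : IsBandPopulation lo hi P) : P.card ≤ hi + 1 - lo := by
  simpa using
    Finset.card_le_card_of_injOn ones (fun z hz => Finset.mem_Icc.mpr (hP.2.1 z hz)) hP.2.2

theorem moeaUpdate_ones (hP : IsBandPopulation lo hi P) (y : Fin n → Bool) :
    IsBandPopulation lo hi (moeaUpdate (fun x => (ones x : ℝ)) lo hi P y) := by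
  rw [_root_.moeaUpdate_ones]
  split_ifs with hy
  · obtain ⟨hlo, hhi, hfresh⟩ := hy
    refine ⟨Finset.insert_nonempty _ _, ?_, ?_⟩
    · simpa [hlo, hhi] using hP.2.1
    · rw [Finset.coe_insert, Set.injOn_insert (by simpa using hfresh y)]
      exact ⟨hP.2.2, fun ⟨z, hz, hzy⟩ => hfresh z hz hzy⟩
  · exact hP

theorem exists_ones_eq_sup (hP : IsBandPopulation lo hi P) :
    ∃ x ∈ P, ones x = P.sup ones ∧ lo ≤ ones x ∧ ones x ≤ hi := by
  obtain ⟨x, hx, hxsup⟩ := Finset.exists_mem_eq_sup P hP.1 ones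
  exact ⟨x, hx, hxsup.symm, hP.2.1 x hx⟩

theorem le_tsum_moeaKernel_mul_sup_lt (hP : IsBandPopulation lo hi P) (hW : P.sup ones < hi) :
    ((hi + 1 - lo : ℕ) : ℝ≥0∞)⁻¹ * (((n - P.sup ones : ℕ) : ℝ≥0∞) / (4 * n)) ≤
      ∑' Q, moeaKernel n (fun x => (ones x : ℝ)) lo hi P Q *
        if P.sup ones < Q.sup ones then 1 else 0 := by
  obtain ⟨xs, hxs, hxsW⟩ := Finset.exists_mem_eq_sup P hP.1 ones
  have hlo : lo ≤ P.sup ones := hxsW ▸ (hP.2.1 xs hxs).1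
  set grows : (Fin n → Bool) → ℝ≥0∞ := fun y =>
    if P.sup ones < (_root_.moeaUpdate (fun x => (ones x : ℝ)) lo hi P y).sup ones then 1 else 0
  rw [tsum_moeaKernel_mul]
  gcongr
  · exact hP.card_le
  calc ((n - P.sup ones : ℕ) : ℝ≥0∞) / (4 * n)
      ≤ ∑' y, if ones y = ones xs + 1 then pmutEA n xs y else 0 := by
        rw [hxsW]; exact card_false_div_le_tsum_pmutEA xs
    _ ≤ ∑' y, pmutEA n xs y * grows y := by
        refine ENNReal.tsum_le_tsum fun y => ?_
        by_cases hy : ones y = ones xs + 1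
        · simp only [if_pos hy, grows, if_pos (sup_ones_lt_sup_moeaUpdate_ones hlo hW (hxsW ▸ hy)),
            mul_one, le_refl]
        · rw [if_neg hy]; exact zero_le
    _ ≤ ∑ x ∈ P, ∑' y, pmutEA n x y * grows y :=
        Finset.single_le_sum (f := fun x => ∑' y, pmutEA n x y * grows y) (fun _ _ => zero_le) hxs

end IsBandPopulation

theorem hitTime_moeaKernel_ones_le_sum {B Bs : ℕ} (hB : B < Bs) (hBs : Bs ≤ n)
    {x₀ : Fin n → Bool} (hx₀ : ones x₀ = B) :
    hitTime (moeaKernel n (fun x => (ones x : ℝ)) B Bs) (fun P => ∃ x ∈ P, ones x = Bs) {x₀} ≤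
      ∑ j ∈ Finset.Ico B Bs, ((4 * n * (Bs + 1 - B) : ℕ) : ℝ≥0∞) / ((n - j : ℕ) : ℝ≥0∞) := by
  have hwait : ∀ W < Bs, ((4 * n * (Bs + 1 - B) : ℕ) : ℝ≥0∞) / ((n - W : ℕ) : ℝ≥0∞) *
      (((Bs + 1 - B : ℕ) : ℝ≥0∞)⁻¹ * (((n - W : ℕ) : ℝ≥0∞) / (4 * n))) = 1 := by
    intro W hW
    have h4n : (4 * n : ℝ≥0∞) ≠ 0 := mul_ne_zero (by norm_num) (Nat.cast_ne_zero.mpr (by omega))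
    have hD : ((Bs + 1 - B : ℕ) : ℝ≥0∞) ≠ 0 := Nat.cast_ne_zero.mpr (by omega)
    have hm : ((n - W : ℕ) : ℝ≥0∞) ≠ 0 := Nat.cast_ne_zero.mpr (by omega)
    calc _ = ((4 * n : ℝ≥0∞) * (4 * n : ℝ≥0∞)⁻¹) *
            (((Bs + 1 - B : ℕ) : ℝ≥0∞) * ((Bs + 1 - B : ℕ) : ℝ≥0∞)⁻¹) *
            (((n - W : ℕ) : ℝ≥0∞) * ((n - W : ℕ) : ℝ≥0∞)⁻¹) := by
          simp only [Nat.cast_mul, Nat.cast_ofNat, div_eq_mul_inv]; ring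
      _ = 1 := by
          rw [ENNReal.mul_inv_cancel h4n (ENNReal.mul_ne_top (by simp) (by simp)),
            ENNReal.mul_inv_cancel hD (by simp), ENNReal.mul_inv_cancel hm (by simp), one_mul,
            one_mul]
  have hstart : IsBandPopulation B Bs {x₀} :=
    ⟨Finset.singleton_nonempty _, by simp [hx₀, hB.le], by simp⟩
  have hlevels := hitTime_le_sum_of_levels (A := fun P => ∃ x ∈ P, ones x = Bs)
    (L := fun P => P.sup ones) (m := Bs)
    (t := fun j => ((4 * n * (Bs + 1 - B) : ℕ) : ℝ≥0∞) / ((n - j : ℕ) : ℝ≥0∞))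
    (hK := tsum_moeaKernel_le_one _ B Bs)
    (hstep := fun P Q hP _ hPQ => by
      obtain ⟨y, rfl⟩ := exists_moeaUpdate_eq_of_moeaKernel_ne_zero hPQ
      exact ⟨hP.moeaUpdate_ones y, sup_ones_le_sup_moeaUpdate_ones B Bs P y⟩)
    (htarget := fun P hP hsup => by
      obtain ⟨x, hx, hxsup, -, hxBs⟩ := hP.exists_ones_eq_sup
      exact ⟨x, hx, by omega⟩)
    (hprog := fun P hP hA => by
      obtain ⟨x, hx, hxsup, -, hxBs⟩ := hP.exists_ones_eq_sup
      have hW : P.sup ones < Bs := lt_of_le_of_ne (hxsup ▸ hxBs) fun h => hA ⟨x, hx, hxsup ▸ h⟩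
      exact (hwait _ hW).symm.trans_le (by gcongr; exact hP.le_tsum_moeaKernel_mul_sup_lt hW))
    hstart
  simpa [hx₀] using hlevels

theorem hitTime_moeaKernel_ones_le_log_of_lt {B Bs : ℕ} (hB : B < Bs) (hBs : Bs < n)
    {x₀ : Fin n → Bool} (hx₀ : ones x₀ = B) :
    hitTime (moeaKernel n (fun x => (ones x : ℝ)) B Bs) (fun P => ∃ x ∈ P, ones x = Bs) {x₀} ≤
      ENNReal.ofReal (8 * n * ((Bs - B : ℕ) : ℝ) * Real.log (((n : ℝ) - B) / ((n : ℝ) - Bs))) := by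
  refine (hitTime_moeaKernel_ones_le_sum hB hBs.le hx₀).trans ?_
  have hpos : ∀ j ∈ Finset.Ico B Bs, 0 < (n : ℝ) - j := fun j hj => by
    have : (j : ℝ) < n := by exact_mod_cast (Finset.mem_Ico.mp hj).2.trans hBs
    linarith
  have hsum := sum_Ico_inv_sub_le_log hB.le hBs
  have hsum₀ : 0 ≤ ∑ j ∈ Finset.Ico B Bs, ((n : ℝ) - j)⁻¹ :=
    Finset.sum_nonneg fun j hj => (inv_pos.mpr (hpos j hj)).le
  have hD : ((Bs + 1 - B : ℕ) : ℝ) ≤ 2 * ((Bs - B : ℕ) : ℝ) := by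
    rw [Nat.cast_sub hB.le, Nat.cast_sub (by omega)]
    push_cast
    have : (B : ℝ) + 1 ≤ Bs := by exact_mod_cast hB
    linarith
  calc ∑ j ∈ Finset.Ico B Bs, ((4 * n * (Bs + 1 - B) : ℕ) : ℝ≥0∞) / ((n - j : ℕ) : ℝ≥0∞)
      = ∑ j ∈ Finset.Ico B Bs,
          ENNReal.ofReal (((4 * n * (Bs + 1 - B) : ℕ) : ℝ) / ((n : ℝ) - j)) := by
        refine Finset.sum_congr rfl fun j hj => ?_
        rw [ENNReal.ofReal_div_of_pos (hpos j hj), ENNReal.ofReal_natCast, ← Nat.cast_sub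
          ((Finset.mem_Ico.mp hj).2.trans hBs).le, ENNReal.ofReal_natCast]
    _ = ENNReal.ofReal (((4 * n * (Bs + 1 - B) : ℕ) : ℝ) *
          ∑ j ∈ Finset.Ico B Bs, ((n : ℝ) - j)⁻¹) := by
        rw [Finset.mul_sum, ENNReal.ofReal_sum_of_nonneg fun j hj =>
          mul_nonneg (Nat.cast_nonneg _) (inv_pos.mpr (hpos j hj)).le]
        simp only [div_eq_mul_inv]
    _ ≤ _ := by
        refine ENNReal.ofReal_le_ofReal ?_
        calc (((4 * n * (Bs + 1 - B) : ℕ) : ℝ)) * ∑ j ∈ Finset.Ico B Bs, ((n : ℝ) - j)⁻¹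
            ≤ (4 * n * (2 * ((Bs - B : ℕ) : ℝ))) * Real.log (((n : ℝ) - B) / ((n : ℝ) - Bs)) := by
              rw [Nat.cast_mul, Nat.cast_mul, Nat.cast_ofNat]
              gcongr
          _ = _ := by ring

theorem hitTime_moeaKernel_ones_le_log_of_gt {B Bs : ℕ} (hB : Bs < B) (hBn : B ≤ n)
    (hBs : 1 ≤ Bs) {x₀ : Fin n → Bool} (hx₀ : ones x₀ = B) :
    hitTime (moeaKernel n (fun x => (ones x : ℝ)) Bs B) (fun P => ∃ x ∈ P, ones x = Bs) {x₀} ≤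
      ENNReal.ofReal (8 * n * ((B - Bs : ℕ) : ℝ) * Real.log ((B : ℝ) / Bs)) := by
  set e := Equiv.finsetCongr (compl_involutive.toPerm (compl : (Fin n → Bool) → _))
  have hx : e {x₀ᶜ} = {x₀} := by simp [e]
  have hA : ∀ P, (∃ x ∈ e P, ones x = Bs) ↔ ∃ x ∈ P, ones x = n - Bs := fun P => by
    simp only [e, Equiv.finsetCongr_apply, Finset.mem_map_equiv]
    rw [compl_surjective.exists]
    simp only [Function.Involutive.toPerm_symm, Function.Involutive.coe_toPerm, compl_compl,
      ones_compl]
    exact exists_congr fun x => and_congr_right fun _ => by have := ones_le x; omega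
  rw [← hx, hitTime_equiv e (fun P Q => moeaKernel_ones_map_compl hB.le hBn P Q) hA]
  have hlt : n - B < n - Bs := Nat.sub_lt_sub_left (hB.trans_le hBn) hB
  have hlt' : n - Bs < n := by omega
  convert hitTime_moeaKernel_ones_le_log_of_lt hlt hlt' (x₀ := x₀ᶜ) (by rw [ones_compl, hx₀])
    using 4
  · congr 1; omega
  · rw [Nat.cast_sub hBn, Nat.cast_sub (hB.le.trans hBn)]; ring_nf

end MOEA

/-- For OneMax under a dynamic uniform constraint changing from `B` to `B*`,
the MOEA started with the population `{x₀}` where `x₀` is optimal for bound `B`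
(exactly `B` ones) finds a solution with exactly `B*` ones in expected time
`O(nD log((n−B)/(n−B*)))` if `B < B*` and `O(nD log(B/B*))` if `B > B*`, where `D = |B*−B|`. -/
theorem stmt_2 :
    ∃ c : ℝ, 0 < c ∧ ∃ n₀ : ℕ, ∀ n : ℕ, n₀ ≤ n → ∀ B Bs : ℕ, B ≤ n → Bs ≤ n →
      ∀ x₀ : Fin n → Bool, ones x₀ = B →
        ((B < Bs → Bs < n →
          hitTime (moeaKernel n (fun x => (ones x : ℝ)) (min B Bs) (max B Bs))
              (fun P => ∃ x ∈ P, ones x = Bs) {x₀} ≤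
            ENNReal.ofReal (c * n * (Nat.dist B Bs : ℝ) *
              Real.log (((n : ℝ) - B) / ((n : ℝ) - Bs)))) ∧
         (Bs < B → 1 ≤ Bs →
          hitTime (moeaKernel n (fun x => (ones x : ℝ)) (min B Bs) (max B Bs))
              (fun P => ∃ x ∈ P, ones x = Bs) {x₀} ≤
            ENNReal.ofReal (c * n * (Nat.dist B Bs : ℝ) *
              Real.log ((B : ℝ) / (Bs : ℝ))))) := by
  refine ⟨8, by norm_num, 0, fun n _ B Bs hB _ x₀ hx₀ => ⟨fun hlt hBsn => ?_, fun hlt hBs => ?_⟩⟩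
  · rw [min_eq_left hlt.le, max_eq_right hlt.le, Nat.dist_eq_sub_of_le hlt.le]
    exact hitTime_moeaKernel_ones_le_log_of_lt hlt hBsn hx₀
  · rw [min_eq_right hlt.le, max_eq_left hlt.le, Nat.dist_eq_sub_of_le_right hlt.le]
    exact hitTime_moeaKernel_ones_le_log_of_gt hlt hB hBs hx₀
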